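/- Let G be an additive commutative group and φ : G → ℝ/ℤ an additive group homomorphism such that (i) every element of the range of φ has finite additive order (i.e. the range of φ lies in the canonical copy of ℚ/ℤ inside ℝ/ℤ), and (ii) for every ε > 0 there exists g ∈ G with φ(g) ≠ 0 and ‖φ(g)‖ < ε. Then G is not finitely generated as an additive group. (This is the algebraic–topological core of Theorem 1.1: if a group admits a homomorphism into ℚ/ℤ taking nonzero values arbitrarily close to 0, then the group is infinitely generated.) -/

import Mathlib

/-
The image of a finitely generated group under `φ` is a finitely generated torsion abelian group,
hence finite. The nonzero elements of a finite subset of a normed group have norm bounded below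
by a positive constant, contradicting the existence of nonzero values of `φ`
arbitrarily close to `0`.
-/

theorem AddMonoidHom.finite_range_of_isOfFinAddOrder {G A : Type*} [AddGroup G]
    [AddCommGroup A] [AddGroup.FG G] (φ : G →+ A) (hfin : ∀ g, IsOfFinAddOrder (φ g)) :
    Finite φ.range := by
  have : AddGroup.FG φ.range := AddGroup.fg_of_surjective φ.rangeRestrict_surjective
  refine AddCommGroup.finite_of_fg_isAddTorsion (G := φ.range) ?_
  rintro ⟨_, g, rfl⟩
  exact AddSubmonoid.isOfFinAddOrder_coe.1 (hfin g)

theorem Set.Finite.exists_pos_le_norm {E : Type*} [NormedAddCommGroup E] {s : Set E}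
    (hs : s.Finite) : ∃ ε > 0, ∀ x ∈ s, x ≠ 0 → ε ≤ ‖x‖ := by
  have hnhds : (s \ {0})ᶜ ∈ nhds (0 : E) :=
    hs.sdiff.isClosed.isOpen_compl.mem_nhds fun h ↦ h.2 rfl
  obtain ⟨ε, hε, hball⟩ := Metric.mem_nhds_iff.1 hnhds
  refine ⟨ε, hε, fun x hx hx0 ↦ not_lt.1 fun hlt ↦ hball ?_ ⟨hx, hx0⟩⟩
  simpa using hlt

theorem stmt_0 (G : Type*) [AddCommGroup G] (φ : G →+ AddCircle (1 : ℝ))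
    (hfin : ∀ g : G, IsOfFinAddOrder (φ g))
    (hsmall : ∀ ε : ℝ, 0 < ε → ∃ g : G, φ g ≠ 0 ∧ ‖φ g‖ < ε) :
    ¬ AddGroup.FG G := by
  intro hFG
  have := φ.finite_range_of_isOfFinAddOrder hfin
  obtain ⟨ε, hε, hbound⟩ := (Set.toFinite (φ.range : Set (AddCircle (1 : ℝ)))).exists_pos_le_norm
  obtain ⟨g, hg0, hgε⟩ := hsmall ε hε
  exact (hbound _ ⟨g, rfl⟩ hg0).not_gt hgε
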